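/- The maximal contact number for 5 points on the sphere equals 8: there is a 5-point configuration on S² whose contact graph has 8 edges, and no 5-point configuration has 9 or more edges. -/

import Mathlib

open scoped RealInnerProductSpace
open scoped Classical

noncomputable section

/-- Angular (geodesic) distance on the unit sphere in `ℝ³`. -/
def gdist (x y : EuclideanSpace ℝ (Fin 3)) : ℝ := Real.arccos ⟪x, y⟫

/-- `e(X)`: the number of unordered pairs of distinct points of `X` at angular distance
exactly `d` (the edges of the contact graph `CG(X)` when `d = ψ(X)`). -/
def contactNumber (X : Finset (EuclideanSpace ℝ (Fin 3))) (d : ℝ) : ℕ :=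
  (X.sym2.filter (fun s => ¬ s.IsDiag ∧
    ∀ x ∈ s, ∀ y ∈ s, x ≠ y → gdist x y = d)).card

/-! If five unit vectors had at least nine contacts, at most one of the ten pairs would be missing,
so deleting an endpoint of that pair leaves four points at mutual angular distance `d`.
Four equiangular unit vectors in `ℝ³` are linearly dependent, and the equal off-diagonal entries
of their Gram matrix force every dependence relation to have equal coefficients; hence they sum to
zero and `cos d = -1/3`. The fifth point `b` is at distance at least `d` from all four, so its
inner products with them are all at most `-1/3`, while they add up to `⟪b, 0⟫ = 0`.

The bound is attained by the north pole together with the square `±e₁, ±e₂` on the equator: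
at `d = π/2` only the two antipodal pairs of the square are not in contact. -/

open Finset Real

local notation "ℝ³" => EuclideanSpace ℝ (Fin 3)

section Equiangular

variable {ι E : Type*} [Fintype ι] [NormedAddCommGroup E] [InnerProductSpace ℝ E]
  {v : ι → E} {c : ℝ}

lemma inner_sum_smul_of_equiangular (hv : ∀ i, ‖v i‖ = 1)
    (hc : ∀ i j, i ≠ j → ⟪v i, v j⟫ = c) (g : ι → ℝ) (j : ι) :
    ⟪v j, ∑ i, g i • v i⟫ = (1 - c) * g j + c * ∑ i, g i := by
  have hoff : ∀ i ∈ univ.erase j, ⟪v j, g i • v i⟫ = c * g i := fun i hi => by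
    rw [real_inner_smul_right, hc j i (ne_of_mem_erase hi).symm, mul_comm]
  rw [inner_sum, ← add_sum_erase _ _ (mem_univ j), sum_congr rfl hoff,
    ← mul_sum, ← add_sum_erase _ _ (mem_univ j), real_inner_smul_right,
    real_inner_self_eq_norm_sq, hv]
  ring

lemma sum_eq_zero_of_equiangular [FiniteDimensional ℝ E] (hv : ∀ i, ‖v i‖ = 1)
    (hc : ∀ i j, i ≠ j → ⟪v i, v j⟫ = c) (hc1 : c ≠ 1)
    (hcard : Module.finrank ℝ E < Fintype.card ι) :
    ∑ i, v i = 0 := by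
  obtain ⟨g, hg, k, hk⟩ := Fintype.not_linearIndependent_iff.mp
    fun hli => hcard.not_ge hli.fintype_card_le_finrank
  have hconst : ∀ j, g j = g k := fun j => by
    have hj := inner_sum_smul_of_equiangular hv hc g j
    have hk' := inner_sum_smul_of_equiangular hv hc g k
    rw [hg, inner_zero_right] at hj hk'
    exact mul_left_cancel₀ (sub_ne_zero.mpr hc1.symm) (by linarith)
  have : g k • ∑ i, v i = 0 := by
    rw [smul_sum, ← hg]
    exact sum_congr rfl fun j _ => by rw [hconst j]
  exact (smul_eq_zero.mp this).resolve_left hk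

lemma one_add_mul_eq_zero_of_equiangular [Nonempty ι] (hv : ∀ i, ‖v i‖ = 1)
    (hc : ∀ i j, i ≠ j → ⟪v i, v j⟫ = c) (hsum : ∑ i, v i = 0) :
    1 + (Fintype.card ι - 1) * c = 0 := by
  have h := inner_sum_smul_of_equiangular hv hc 1 (Classical.arbitrary ι)
  simp only [Pi.one_apply, one_smul, hsum, inner_zero_right, sum_const,
    card_univ, nsmul_eq_mul, mul_one] at h
  linarith

end Equiangular

lemma card_sym2_filter_not_isDiag {α : Type*} [DecidableEq α] (s : Finset α) :
    #(s.sym2.filter (¬ ·.IsDiag)) = (#s).choose 2 := by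
  rw [← Sym2.card_image_offDiag]
  congr 1
  ext z
  induction z using Sym2.ind with
  | _ a b => simp [and_assoc]; grind

lemma exists_forall_erase_of_choose_two_le {α : Type*} [DecidableEq α] {X : Finset α}
    (hX : X.Nonempty) {P : Sym2 α → Prop} [DecidablePred P]
    (h : (#X).choose 2 ≤ #(X.sym2.filter fun z => ¬ z.IsDiag ∧ P z) + 1) :
    ∃ b ∈ X, ∀ p ∈ X.erase b, ∀ q ∈ X.erase b, p ≠ q → P s(p, q) := by
  have hB : #(X.sym2.filter fun z => ¬ Sym2.IsDiag z ∧ ¬ P z) ≤ 1 := by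
    have := card_filter_add_card_filter_not (s := X.sym2.filter (¬ ·.IsDiag)) P
    rw [filter_filter, filter_filter, card_sym2_filter_not_isDiag] at this
    omega
  set B := X.sym2.filter fun z => ¬ Sym2.IsDiag z ∧ ¬ P z
  obtain ⟨b, hbX, hbB⟩ : ∃ b ∈ X, ∀ y ∈ B, b ∈ y := by
    rcases B.eq_empty_or_nonempty with hempty | ⟨z, hz⟩
    · obtain ⟨b, hb⟩ := hX
      exact ⟨b, hb, by simp [hempty]⟩
    · induction z using Sym2.ind with
      | _ a b =>
        refine ⟨b, (mk_mem_sym2_iff.mp (mem_filter.mp hz).1).2, fun z hz' => ?_⟩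
        rw [card_le_one.mp hB z hz' _ hz]
        exact Sym2.mem_mk_right a b
  refine ⟨b, hbX, fun p hp q hq hpq => by_contra fun hP => ?_⟩
  have hpqB : s(p, q) ∈ B := mem_filter.mpr
    ⟨mk_mem_sym2_iff.mpr ⟨mem_of_mem_erase hp, mem_of_mem_erase hq⟩, by simpa using hpq, hP⟩
  rcases Sym2.mem_iff.mp (hbB _ hpqB) with rfl | rfl
  · exact ne_of_mem_erase hp rfl
  · exact ne_of_mem_erase hq rfl

lemma cos_gdist {x y : ℝ³} (hx : ‖x‖ = 1) (hy : ‖y‖ = 1) : cos (gdist x y) = ⟪x, y⟫ := by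
  have h := abs_le.mp (abs_real_inner_le_norm x y)
  rw [hx, hy, one_mul] at h
  exact cos_arccos h.1 h.2

lemma inner_le_cos_of_le_gdist {x y : ℝ³} (hx : ‖x‖ = 1) (hy : ‖y‖ = 1) {d : ℝ} (hd : 0 ≤ d)
    (h : d ≤ gdist x y) : ⟪x, y⟫ ≤ cos d :=
  cos_gdist hx hy ▸ cos_le_cos_of_nonneg_of_le_pi hd (arccos_le_pi _) h

lemma regular_tetrahedron {Y : Finset ℝ³} (hY : #Y = 4) (hnorm : ∀ p ∈ Y, ‖p‖ = 1) {c : ℝ}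
    (hc : ∀ p ∈ Y, ∀ q ∈ Y, p ≠ q → ⟪p, q⟫ = c) : c = -1 / 3 ∧ ∑ p ∈ Y, p = 0 := by
  have hv : ∀ i : Y, ‖(i : ℝ³)‖ = 1 := fun i => hnorm i i.2
  have hc' : ∀ i j : Y, i ≠ j → ⟪(i : ℝ³), j⟫ = c := fun i j hij =>
    hc i i.2 j j.2 (Subtype.coe_ne_coe.mpr hij)
  have hc1 : c ≠ 1 := by
    obtain ⟨p, hp, q, hq, hpq⟩ := one_lt_card.mp (by omega : 1 < #Y)
    rintro rfl
    exact hpq ((inner_eq_one_iff_of_norm_eq_one (hnorm p hp) (hnorm q hq)).mp (hc p hp q hq hpq))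
  have hcard : Fintype.card Y = 4 := by rw [Fintype.card_coe, hY]
  have hsum := sum_eq_zero_of_equiangular hv hc' hc1
    (by rw [finrank_euclideanSpace_fin, hcard]; norm_num)
  have : Nonempty Y := Fintype.card_pos_iff.mp (by omega)
  have hc3 := one_add_mul_eq_zero_of_equiangular hv hc' hsum
  rw [hcard] at hc3
  norm_num at hc3
  exact ⟨by linarith, by rwa [sum_coe_sort Y fun p => p] at hsum⟩

lemma contactNumber_le_eight {X : Finset ℝ³} (hX : #X = 5) (hnorm : ∀ p ∈ X, ‖p‖ = 1) {d : ℝ}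
    (hmin : ∀ p ∈ X, ∀ q ∈ X, p ≠ q → d ≤ gdist p q) : contactNumber X d ≤ 8 := by
  by_contra! h9
  have h10 : (#X).choose 2 ≤ contactNumber X d + 1 := by
    rw [hX, show Nat.choose 5 2 = 10 by rfl]
    omega
  obtain ⟨b, hb, hY⟩ := exists_forall_erase_of_choose_two_le (card_pos.mp (by omega)) h10
  set Y := X.erase b
  have hY4 : #Y = 4 := by rw [card_erase_of_mem hb, hX]
  have hYnorm : ∀ p ∈ Y, ‖p‖ = 1 := fun p hp => hnorm p (mem_of_mem_erase hp)
  have hYd : ∀ p ∈ Y, ∀ q ∈ Y, p ≠ q → gdist p q = d := fun p hp q hq hpq =>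
    hY p hp q hq hpq p (Sym2.mem_mk_left p q) q (Sym2.mem_mk_right p q) hpq
  obtain ⟨hcos, hsum⟩ := regular_tetrahedron (c := cos d) hY4 hYnorm fun p hp q hq hpq => by
    rw [← hYd p hp q hq hpq, cos_gdist (hYnorm p hp) (hYnorm q hq)]
  have hd : 0 ≤ d := by
    obtain ⟨p, hp, q, hq, hpq⟩ := one_lt_card.mp (by omega : 1 < #Y)
    exact hYd p hp q hq hpq ▸ arccos_nonneg _
  have hfar : ∀ p ∈ Y, ⟪b, p⟫ ≤ -1 / 3 := fun p hp =>
    hcos ▸ inner_le_cos_of_le_gdist (hnorm b hb) (hYnorm p hp) hd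
      (hmin b hb p (mem_of_mem_erase hp) (ne_of_mem_erase hp).symm)
  have : (0 : ℝ) ≤ #Y * (-1 / 3) :=
    calc (0 : ℝ) = ⟪b, ∑ p ∈ Y, p⟫ := by rw [hsum, inner_zero_right]
      _ = ∑ p ∈ Y, ⟪b, p⟫ := inner_sum _ _ _
      _ ≤ ∑ _p ∈ Y, (-1 / 3 : ℝ) := sum_le_sum hfar
      _ = #Y * (-1 / 3) := by rw [sum_const, nsmul_eq_mul]
  rw [hY4] at this
  norm_num at this

def intPoint {n : ℕ} (u : Fin n → ℤ) : EuclideanSpace ℝ (Fin n) :=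
  WithLp.toLp 2 fun k => (u k : ℝ)

lemma inner_intPoint {n : ℕ} (u v : Fin n → ℤ) :
    ⟪intPoint u, intPoint v⟫ = ((u ⬝ᵥ v : ℤ) : ℝ) := by
  simp [intPoint, PiLp.inner_apply, dotProduct, mul_comm]

lemma intPoint_injective {n : ℕ} : Function.Injective (intPoint (n := n)) := fun u v h => by
  ext k
  simpa [intPoint] using congrFun (congrArg WithLp.ofLp h) k

lemma norm_intPoint_eq_one {n : ℕ} {u : Fin n → ℤ} (h : u ⬝ᵥ u = 1) : ‖intPoint u‖ = 1 := by
  rw [norm_eq_sqrt_real_inner, inner_intPoint, h, Int.cast_one, sqrt_one]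

lemma gdist_intPoint_eq_pi_div_two_iff (u v : Fin 3 → ℤ) :
    gdist (intPoint u) (intPoint v) = π / 2 ↔ u ⬝ᵥ v = 0 := by
  rw [gdist, inner_intPoint, arccos_eq_pi_div_two, Int.cast_eq_zero]

lemma pi_div_two_le_gdist_intPoint_iff (u v : Fin 3 → ℤ) :
    π / 2 ≤ gdist (intPoint u) (intPoint v) ↔ u ⬝ᵥ v ≤ 0 := by
  rw [gdist, inner_intPoint, ← not_lt, arccos_lt_pi_div_two, Int.cast_pos, not_lt]

lemma contactNumber_image {ι : Type*} (s : Finset ι) {f : ι → ℝ³}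
    (hf : Function.Injective f) (d : ℝ) :
    contactNumber (s.image f) d = #(s.sym2.filter fun z => ¬ z.IsDiag ∧
      ∀ i ∈ z, ∀ j ∈ z, i ≠ j → gdist (f i) (f j) = d) := by
  rw [contactNumber, sym2_image, filter_image, card_image_of_injective _ (Sym2.map.injective hf)]
  congr 1
  refine filter_congr fun z _ => ?_
  simp [Sym2.isDiag_map hf, Sym2.mem_map, hf.ne_iff]

def poleAndSquare : Fin 5 → Fin 3 → ℤ :=
  ![![0, 0, 1], ![1, 0, 0], ![0, 1, 0], ![-1, 0, 0], ![0, -1, 0]]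

lemma poleAndSquare_injective : Function.Injective poleAndSquare := by decide

lemma poleAndSquare_dotProduct_self : ∀ i, poleAndSquare i ⬝ᵥ poleAndSquare i = 1 := by decide

lemma poleAndSquare_dotProduct_nonpos :
    ∀ i j, i ≠ j → poleAndSquare i ⬝ᵥ poleAndSquare j ≤ 0 := by decide

lemma contactNumber_poleAndSquare :
    contactNumber (univ.image (intPoint ∘ poleAndSquare)) (π / 2) = 8 := by
  rw [contactNumber_image _ (intPoint_injective.comp poleAndSquare_injective)]
  simp only [Function.comp_apply, gdist_intPoint_eq_pi_div_two_iff]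
  decide

lemma exists_contactNumber_eq_eight :
    ∃ X : Finset ℝ³, #X = 5 ∧ (∀ p ∈ X, ‖p‖ = 1) ∧
      ∃ d : ℝ, (∀ p ∈ X, ∀ q ∈ X, p ≠ q → d ≤ gdist p q) ∧
        (∃ p ∈ X, ∃ q ∈ X, p ≠ q ∧ gdist p q = d) ∧ contactNumber X d = 8 := by
  have hinj := intPoint_injective.comp poleAndSquare_injective
  refine ⟨univ.image (intPoint ∘ poleAndSquare),
    by rw [card_image_of_injective _ hinj, card_univ, Fintype.card_fin],
    ?_, π / 2, ?_, ?_, contactNumber_poleAndSquare⟩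
  · simp only [forall_mem_image, mem_univ, forall_const]
    intro i
    exact norm_intPoint_eq_one (poleAndSquare_dotProduct_self i)
  · simp only [forall_mem_image, mem_univ, forall_const]
    intro i j hij
    exact (pi_div_two_le_gdist_intPoint_iff _ _).mpr
      (poleAndSquare_dotProduct_nonpos i j (hinj.ne_iff.mp hij))
  · exact ⟨_, mem_image_of_mem _ (mem_univ 0), _, mem_image_of_mem _ (mem_univ 1),
      hinj.ne (by decide), (gdist_intPoint_eq_pi_div_two_iff _ _).mpr (by decide)⟩

/-- The maximal contact number for 5 points on the sphere equals 8: there is a 5-point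
configuration on `S²` whose contact graph has 8 edges, and no 5-point configuration has
9 or more edges. -/
theorem max_contact_number_five :
    (∃ X : Finset (EuclideanSpace ℝ (Fin 3)), X.card = 5 ∧
      (∀ p ∈ X, ‖p‖ = 1) ∧
      ∃ d : ℝ, (∀ p ∈ X, ∀ q ∈ X, p ≠ q → d ≤ gdist p q) ∧
        (∃ p ∈ X, ∃ q ∈ X, p ≠ q ∧ gdist p q = d) ∧
        contactNumber X d = 8) ∧
    (∀ X : Finset (EuclideanSpace ℝ (Fin 3)), X.card = 5 →
      (∀ p ∈ X, ‖p‖ = 1) →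
      ∀ d : ℝ, (∀ p ∈ X, ∀ q ∈ X, p ≠ q → d ≤ gdist p q) →
        (∃ p ∈ X, ∃ q ∈ X, p ≠ q ∧ gdist p q = d) →
        contactNumber X d ≤ 8) :=
  ⟨exists_contactNumber_eq_eight, fun _ hX hnorm _ hmin _ => contactNumber_le_eight hX hnorm hmin⟩
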